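/- Let s, i, d, a, r, e be a solution of the SIDARE model on [0,∞) with nonnegative parameters satisfying γ_d + ξ_d > 0 and γ_a + μ > 0, nonnegative initial values at t = 0 summing to 1, and β s(0) < γ_i + ξ_i + ν. Then there exist limits s∞, r∞, e∞ ∈ [0,1] such that as t → ∞ the state (s(t), i(t), d(t), a(t), r(t), e(t)) converges to the equilibrium point (s∞, 0, 0, 0, r∞, e∞). -/

import Mathlib

open Set Filter Real Topology

/-- Constancy from zero right-derivative on `Ici 0`. -/
lemma sidare_constOn {f : ℝ → ℝ}
    (hf : ∀ t ∈ Set.Ici (0:ℝ), HasDerivWithinAt f 0 (Set.Ici 0) t) :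
    ∀ t ∈ Set.Ici (0:ℝ), f t = f 0 := by
  intro t ht
  exact constant_of_has_deriv_right_zero
    (fun x hx => ((hf x hx.1).continuousWithinAt).mono Icc_subset_Ici_self)
    (fun x hx => (hf x hx.1).mono (Ici_subset_Ici.2 hx.1))
    t ⟨ht, le_rfl⟩

/-- Monotonicity from nonnegative right-derivative on `Ici 0`. -/
lemma sidare_monoOn {f g : ℝ → ℝ}
    (hf : ∀ t ∈ Set.Ici (0:ℝ), HasDerivWithinAt f (g t) (Set.Ici 0) t)
    (hg : ∀ t ∈ Set.Ici (0:ℝ), 0 ≤ g t) :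
    MonotoneOn f (Set.Ici (0:ℝ)) := by
  apply monotoneOn_of_hasDerivWithinAt_nonneg (f' := g) (convex_Ici 0)
    (fun x hx => (hf x hx).continuousWithinAt)
  · intro x hx
    rw [interior_Ici] at hx ⊢
    exact (hf x (Set.mem_Ici.2 (le_of_lt (Set.mem_Ioi.1 hx)))).mono Ioi_subset_Ici_self
  · intro x hx
    rw [interior_Ici] at hx
    exact hg x (Set.mem_Ici.2 (le_of_lt (Set.mem_Ioi.1 hx)))

/-- Sign preservation for a scalar linear ODE `f' = p f`. -/
lemma sidare_nonneg_lin {f p : ℝ → ℝ}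
    (hp : ContinuousOn p (Set.Ici 0))
    (hf : ∀ t ∈ Set.Ici (0:ℝ), HasDerivWithinAt f (p t * f t) (Set.Ici 0) t)
    (h0 : 0 ≤ f 0) : ∀ t ∈ Set.Ici (0:ℝ), 0 ≤ f t := by
  intro t1 ht1
  by_contra hneg
  push_neg at hneg
  have hfc : ContinuousOn f (Set.Icc 0 t1) :=
    fun x hx => ((hf x hx.1).continuousWithinAt).mono Icc_subset_Ici_self
  set S : Set ℝ := Set.Icc 0 t1 ∩ f ⁻¹' Set.Ici 0 with hS
  have hScl : IsClosed S := hfc.preimage_isClosed_of_isClosed isClosed_Icc isClosed_Ici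
  have hSne : S.Nonempty := ⟨0, ⟨le_rfl, ht1⟩, h0⟩
  have hSbdd : BddAbove S := ⟨t1, fun x hx => hx.1.2⟩
  set t0 := sSup S with ht0def
  have ht0S : t0 ∈ S := hScl.csSup_mem hSne hSbdd
  have ht00 : (0:ℝ) ≤ t0 := ht0S.1.1
  have ht0le : t0 ≤ t1 := ht0S.1.2
  have hft0nn : 0 ≤ f t0 := ht0S.2
  have ht0lt : t0 < t1 := lt_of_le_of_ne ht0le (fun h => by rw [h] at hft0nn; linarith)
  have hft0 : f t0 = 0 := by
    by_contra h
    have hpos : 0 < f t0 := lt_of_le_of_ne hft0nn (Ne.symm h)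
    have hcw : ContinuousWithinAt f (Set.Icc 0 t1) t0 := hfc t0 ht0S.1
    have hev : ∀ᶠ x in 𝓝[Set.Icc 0 t1] t0, 0 < f x := hcw.eventually_const_lt hpos
    have hsub : Set.Ioc t0 t1 ⊆ Set.Icc 0 t1 := fun x hx => ⟨le_trans ht00 hx.1.le, hx.2⟩
    have hev2 : ∀ᶠ x in 𝓝[Set.Ioc t0 t1] t0, 0 < f x :=
      hev.filter_mono (nhdsWithin_mono _ hsub)
    have hne : (𝓝[Set.Ioc t0 t1] t0).NeBot := left_nhdsWithin_Ioc_neBot ht0lt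
    obtain ⟨x, hfx, hxmem⟩ := (hev2.and eventually_mem_nhdsWithin).exists
    have hxS : x ∈ S := ⟨hsub hxmem, le_of_lt hfx⟩
    have : x ≤ t0 := le_csSup hSbdd hxS
    exact absurd this (not_le.2 hxmem.1)
  -- Grönwall on [t0, t1]
  obtain ⟨K, hK⟩ := (isCompact_Icc (a := t0) (b := t1)).exists_bound_of_continuousOn
    (hp.mono (fun x hx => le_trans ht00 hx.1))
  have key := norm_le_gronwallBound_of_norm_deriv_right_le
    (f := f) (f' := fun t => p t * f t) (δ := 0) (K := max K 0) (ε := 0) (a := t0) (b := t1)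
    (fun x hx => ((hf x (le_trans ht00 hx.1)).continuousWithinAt).mono
      (fun y hy => le_trans ht00 hy.1))
    (fun x hx => (hf x (le_trans ht00 hx.1)).mono (Ici_subset_Ici.2 (le_trans ht00 hx.1)))
    (by simp [hft0])
    (fun x hx => by
      rw [norm_mul]
      have h1 : ‖p x‖ ≤ K := hK x ⟨hx.1, hx.2.le⟩
      have h2 : ‖p x‖ ≤ max K 0 := le_trans h1 (le_max_left _ _)
      have := mul_le_mul_of_nonneg_right h2 (norm_nonneg (f x))
      linarith)
    t1 ⟨ht0le, le_rfl⟩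
  rw [gronwallBound_ε0_δ0] at key
  have : f t1 = 0 := norm_le_zero_iff.1 key
  linarith

/-- Derivative of `f t * exp (c t)`. -/
lemma sidare_expfac {f g : ℝ → ℝ} {c : ℝ}
    (hf : ∀ t ∈ Set.Ici (0:ℝ), HasDerivWithinAt f (g t) (Set.Ici 0) t) :
    ∀ t ∈ Set.Ici (0:ℝ), HasDerivWithinAt (fun t => f t * Real.exp (c * t))
      ((g t + c * f t) * Real.exp (c * t)) (Set.Ici 0) t := by
  intro t ht
  have hexp : HasDerivAt (fun t : ℝ => Real.exp (c * t)) (Real.exp (c * t) * (c * 1)) t :=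
    (Real.hasDerivAt_exp (c * t)).comp t ((hasDerivAt_id t).const_mul c)
  have h := (hf t ht).mul hexp.hasDerivWithinAt
  rw [show (g t + c * f t) * Real.exp (c * t) =
      g t * Real.exp (c * t) + f t * (Real.exp (c * t) * (c * 1)) by ring]
  exact h
open Set Filter Real Topology

/-- **Convergence of the SIDARE state to an equilibrium point.**
For a solution of the SIDARE model on `[0,∞)` with nonnegative parameters
satisfying `γ_d + ξ_d > 0` and `γ_a + μ > 0`, nonnegative initial values
summing to `1`, and `β s(0) < γ_i + ξ_i + ν`, there exist limits
`s∞, r∞, e∞ ∈ [0,1]` such that the state converges to the equilibrium point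
`(s∞, 0, 0, 0, r∞, e∞)` as `t → ∞`. -/
theorem sidare_tendsto_equilibrium
    (β γi γd γa ν ξi ξd μ : ℝ)
    (hβ : 0 ≤ β) (hγi : 0 ≤ γi) (hγd : 0 ≤ γd) (hγa : 0 ≤ γa)
    (hν : 0 ≤ ν) (hξi : 0 ≤ ξi) (hξd : 0 ≤ ξd) (hμ : 0 ≤ μ)
    (s i d a r e : ℝ → ℝ)
    (hs : ∀ t ∈ Set.Ici (0:ℝ),
      HasDerivWithinAt s (-β * s t * i t) (Set.Ici (0:ℝ)) t)
    (hi : ∀ t ∈ Set.Ici (0:ℝ),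
      HasDerivWithinAt i (β * s t * i t - (γi + ξi + ν) * i t) (Set.Ici (0:ℝ)) t)
    (hd : ∀ t ∈ Set.Ici (0:ℝ),
      HasDerivWithinAt d (ν * i t - (γd + ξd) * d t) (Set.Ici (0:ℝ)) t)
    (ha : ∀ t ∈ Set.Ici (0:ℝ),
      HasDerivWithinAt a (ξi * i t + ξd * d t - (γa + μ) * a t) (Set.Ici (0:ℝ)) t)
    (hr : ∀ t ∈ Set.Ici (0:ℝ),
      HasDerivWithinAt r (γi * i t + γd * d t + γa * a t) (Set.Ici (0:ℝ)) t)
    (he : ∀ t ∈ Set.Ici (0:ℝ),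
      HasDerivWithinAt e (μ * a t) (Set.Ici (0:ℝ)) t)
    (hs0 : 0 ≤ s 0) (hi0 : 0 ≤ i 0) (hd0 : 0 ≤ d 0)
    (ha0 : 0 ≤ a 0) (hr0 : 0 ≤ r 0) (he0 : 0 ≤ e 0)
    (hsum0 : s 0 + i 0 + d 0 + a 0 + r 0 + e 0 = 1)
    (h2 : 0 < γd + ξd) (h3 : 0 < γa + μ)
    (hR : β * s 0 < γi + ξi + ν) :
    ∃ sInf rInf eInf : ℝ,
      sInf ∈ Set.Icc (0:ℝ) 1 ∧ rInf ∈ Set.Icc (0:ℝ) 1 ∧ eInf ∈ Set.Icc (0:ℝ) 1 ∧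
      Filter.Tendsto s Filter.atTop (nhds sInf) ∧
      Filter.Tendsto i Filter.atTop (nhds 0) ∧
      Filter.Tendsto d Filter.atTop (nhds 0) ∧
      Filter.Tendsto a Filter.atTop (nhds 0) ∧
      Filter.Tendsto r Filter.atTop (nhds rInf) ∧
      Filter.Tendsto e Filter.atTop (nhds eInf) ∧
      -- the limit point is an equilibrium of the SIDARE vector field
      (-β * sInf * 0 = 0 ∧
       β * sInf * 0 - (γi + ξi + ν) * 0 = 0 ∧
       ν * 0 - (γd + ξd) * 0 = 0 ∧
       ξi * 0 + ξd * 0 - (γa + μ) * 0 = 0 ∧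
       γi * 0 + γd * 0 + γa * 0 = 0 ∧
       μ * 0 = 0) := by
  set c := γi + ξi + ν with hc
  set k := γd + ξd with hk
  set m := γa + μ with hm
  have hsc : ContinuousOn s (Set.Ici 0) := fun t ht => (hs t ht).continuousWithinAt
  have hic : ContinuousOn i (Set.Ici 0) := fun t ht => (hi t ht).continuousWithinAt
  -- nonnegativity of i and s
  have hi_nn : ∀ t ∈ Set.Ici (0:ℝ), 0 ≤ i t := by
    refine sidare_nonneg_lin (p := fun t => β * s t - c) ?_ ?_ hi0
    · exact (continuousOn_const.mul hsc).sub continuousOn_const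
    · intro t ht
      have h := hi t ht
      have hz : β * s t * i t - c * i t = (β * s t - c) * i t := by ring
      rwa [hz] at h
  have hs_nn : ∀ t ∈ Set.Ici (0:ℝ), 0 ≤ s t := by
    refine sidare_nonneg_lin (p := fun t => -β * i t) ?_ ?_ hs0
    · exact continuousOn_const.mul hic
    · intro t ht
      have h := hs t ht
      have hz : -β * s t * i t = -β * i t * s t := by ring
      rwa [hz] at h
  -- nonnegativity of d
  have hd_nn : ∀ t ∈ Set.Ici (0:ℝ), 0 ≤ d t := by
    have hg : ∀ t ∈ Set.Ici (0:ℝ),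
        0 ≤ (ν * i t - k * d t + k * d t) * Real.exp (k * t) := by
      intro t ht
      have h1 : ν * i t - k * d t + k * d t = ν * i t := by ring
      rw [h1]
      exact mul_nonneg (mul_nonneg hν (hi_nn t ht)) (Real.exp_pos _).le
    have hmono := sidare_monoOn (sidare_expfac (c := k) hd) hg
    intro t ht
    have h2' := hmono Set.self_mem_Ici ht ht
    simp only [mul_zero, Real.exp_zero, mul_one] at h2'
    by_contra hcon
    push_neg at hcon
    have := mul_neg_of_neg_of_pos hcon (Real.exp_pos (k * t))
    linarith
  -- nonnegativity of a
  have ha_nn : ∀ t ∈ Set.Ici (0:ℝ), 0 ≤ a t := by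
    have hg : ∀ t ∈ Set.Ici (0:ℝ),
        0 ≤ (ξi * i t + ξd * d t - m * a t + m * a t) * Real.exp (m * t) := by
      intro t ht
      have h1 : ξi * i t + ξd * d t - m * a t + m * a t = ξi * i t + ξd * d t := by ring
      rw [h1]
      exact mul_nonneg (add_nonneg (mul_nonneg hξi (hi_nn t ht))
        (mul_nonneg hξd (hd_nn t ht))) (Real.exp_pos _).le
    have hmono := sidare_monoOn (sidare_expfac (c := m) ha) hg
    intro t ht
    have h2' := hmono Set.self_mem_Ici ht ht
    simp only [mul_zero, Real.exp_zero, mul_one] at h2'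
    by_contra hcon
    push_neg at hcon
    have := mul_neg_of_neg_of_pos hcon (Real.exp_pos (m * t))
    linarith
  -- r and e are monotone, hence nonnegative
  have hr_mono := sidare_monoOn hr (fun t ht => add_nonneg (add_nonneg
    (mul_nonneg hγi (hi_nn t ht)) (mul_nonneg hγd (hd_nn t ht))) (mul_nonneg hγa (ha_nn t ht)))
  have he_mono := sidare_monoOn he (fun t ht => mul_nonneg hμ (ha_nn t ht))
  have hr_nn : ∀ t ∈ Set.Ici (0:ℝ), 0 ≤ r t :=
    fun t ht => le_trans hr0 (hr_mono Set.self_mem_Ici ht ht)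
  have he_nn : ∀ t ∈ Set.Ici (0:ℝ), 0 ≤ e t :=
    fun t ht => le_trans he0 (he_mono Set.self_mem_Ici ht ht)
  -- conservation of total
  have hNder : ∀ t ∈ Set.Ici (0:ℝ), HasDerivWithinAt
      (fun t => s t + i t + d t + a t + r t + e t) 0 (Set.Ici 0) t := by
    intro t ht
    have hder := (((((hs t ht).add (hi t ht)).add (hd t ht)).add (ha t ht)).add
      (hr t ht)).add (he t ht)
    have hz : -β * s t * i t + (β * s t * i t - c * i t) + (ν * i t - k * d t) +
        (ξi * i t + ξd * d t - m * a t) + (γi * i t + γd * d t + γa * a t) + μ * a t = 0 := by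
      rw [hc, hk, hm]; ring
    rwa [hz] at hder
  have hNconst := sidare_constOn hNder
  have hsum : ∀ t ∈ Set.Ici (0:ℝ), s t + i t + d t + a t + r t + e t = 1 := by
    intro t ht
    have h := hNconst t ht
    linarith
  -- upper bounds
  have hs1 : ∀ t ∈ Set.Ici (0:ℝ), s t ≤ 1 := by
    intro t ht
    have := hsum t ht
    have h1 := hi_nn t ht; have h2' := hd_nn t ht; have h3' := ha_nn t ht
    have h4 := hr_nn t ht; have h5 := he_nn t ht
    linarith
  have hr1 : ∀ t ∈ Set.Ici (0:ℝ), r t ≤ 1 := by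
    intro t ht
    have := hsum t ht
    have h1 := hi_nn t ht; have h2' := hd_nn t ht; have h3' := ha_nn t ht
    have h4 := hs_nn t ht; have h5 := he_nn t ht
    linarith
  have he1 : ∀ t ∈ Set.Ici (0:ℝ), e t ≤ 1 := by
    intro t ht
    have := hsum t ht
    have h1 := hi_nn t ht; have h2' := hd_nn t ht; have h3' := ha_nn t ht
    have h4 := hs_nn t ht; have h5 := hr_nn t ht
    linarith
  -- s is antitone
  have hsneg : ∀ t ∈ Set.Ici (0:ℝ),
      HasDerivWithinAt (fun t => -s t) (β * s t * i t) (Set.Ici 0) t := by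
    intro t ht
    have h := (hs t ht).neg
    have hz : -(-β * s t * i t) = β * s t * i t := by ring
    rwa [hz] at h
  have hs_anti : ∀ x y : ℝ, 0 ≤ x → x ≤ y → s y ≤ s x := by
    have hmono := sidare_monoOn hsneg
      (fun t ht => mul_nonneg (mul_nonneg hβ (hs_nn t ht)) (hi_nn t ht))
    intro x y hx hxy
    have := hmono hx (le_trans hx hxy) hxy
    simpa using this
  -- parameters for the Lyapunov function
  set ε := c - β * s 0 with hε
  have hεpos : 0 < ε := by rw [hε]; linarith
  have hminpos : 0 < min ε (min k m) := lt_min hεpos (lt_min h2 h3)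
  set δ := min ε (min k m) / 2 with hδ
  have hδpos : 0 < δ := by rw [hδ]; linarith
  have hδε : δ < ε := by
    have h := min_le_left ε (min k m); rw [hδ]; linarith
  have hδk : δ < k := by
    have h := (min_le_right ε (min k m)).trans (min_le_left k m); rw [hδ]; linarith
  have hδm : δ < m := by
    have h := (min_le_right ε (min k m)).trans (min_le_right k m); rw [hδ]; linarith
  set C := ξd / (k - δ) + 1 with hC
  have hC1 : 1 ≤ C := by
    have := div_nonneg hξd (by linarith : (0:ℝ) ≤ k - δ)
    rw [hC]; linarith
  have hCk : ξd ≤ C * (k - δ) := by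
    rw [hC, add_mul, one_mul, div_mul_cancel₀ _ (sub_pos.2 hδk).ne']
    linarith
  set B := (C * ν + ξi) / (ε - δ) + 1 with hB
  have hCν : 0 ≤ C * ν + ξi := add_nonneg (mul_nonneg (by linarith) hν) hξi
  have hB1 : 1 ≤ B := by
    have := div_nonneg hCν (by linarith : (0:ℝ) ≤ ε - δ)
    rw [hB]; linarith
  have hBε : C * ν + ξi ≤ B * (ε - δ) := by
    have hc1 : (C * ν + ξi) / (ε - δ) * (ε - δ) = C * ν + ξi :=
      div_mul_cancel₀ _ (sub_pos.2 hδε).ne'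
    have hc2 : B * (ε - δ) = (C * ν + ξi) / (ε - δ) * (ε - δ) + (ε - δ) := by
      rw [hB]; ring
    rw [hc2, hc1]
    linarith
  -- the Lyapunov function u = B i + C d + a
  have hud : ∀ t ∈ Set.Ici (0:ℝ), HasDerivWithinAt (fun t => B * i t + C * d t + a t)
      (B * (β * s t * i t - c * i t) + C * (ν * i t - k * d t) +
        (ξi * i t + ξd * d t - m * a t)) (Set.Ici 0) t := by
    intro t ht
    exact (((hi t ht).const_mul B).add ((hd t ht).const_mul C)).add (ha t ht)
  have hvd := sidare_expfac (c := δ) hud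
  have hvneg : ∀ t ∈ Set.Ici (0:ℝ), HasDerivWithinAt
      (fun t => -((B * i t + C * d t + a t) * Real.exp (δ * t)))
      (-((B * (β * s t * i t - c * i t) + C * (ν * i t - k * d t) +
        (ξi * i t + ξd * d t - m * a t) + δ * (B * i t + C * d t + a t)) * Real.exp (δ * t)))
      (Set.Ici 0) t := fun t ht => (hvd t ht).neg
  have hkey : ∀ t ∈ Set.Ici (0:ℝ),
      0 ≤ -((B * (β * s t * i t - c * i t) + C * (ν * i t - k * d t) +
        (ξi * i t + ξd * d t - m * a t) + δ * (B * i t + C * d t + a t)) *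
        Real.exp (δ * t)) := by
    intro t ht
    have h1 : β * s t ≤ β * s 0 := mul_le_mul_of_nonneg_left (hs_anti 0 t le_rfl ht) hβ
    have p1 : 0 ≤ (β * s 0 - β * s t) * (B * i t) :=
      mul_nonneg (by linarith) (mul_nonneg (by linarith) (hi_nn t ht))
    have p2 : 0 ≤ (B * (ε - δ) - (C * ν + ξi)) * i t :=
      mul_nonneg (by linarith) (hi_nn t ht)
    have p3 : 0 ≤ (C * (k - δ) - ξd) * d t := mul_nonneg (by linarith) (hd_nn t ht)
    have p4 : 0 ≤ (m - δ) * a t := mul_nonneg (by linarith) (ha_nn t ht)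
    have p5 : (ε - (c - β * s 0)) * (B * i t) = 0 := by rw [hε]; ring
    have hε0 : ε - (c - β * s 0) = 0 := by rw [hε]; ring
    have hX : B * (β * s t * i t - c * i t) + C * (ν * i t - k * d t) +
        (ξi * i t + ξd * d t - m * a t) + δ * (B * i t + C * d t + a t) ≤ 0 := by
      have hXeq : B * (β * s t * i t - c * i t) + C * (ν * i t - k * d t) +
          (ξi * i t + ξd * d t - m * a t) + δ * (B * i t + C * d t + a t) =
          -((β * s 0 - β * s t) * (B * i t) + (B * (ε - δ) - (C * ν + ξi)) * i t +
            (C * (k - δ) - ξd) * d t + (m - δ) * a t) +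
          (ε - (c - β * s 0)) * (B * i t) := by ring
      rw [hXeq, hε0, zero_mul, add_zero]
      linarith
    have := mul_le_mul_of_nonneg_right hX (Real.exp_pos (δ * t)).le
    simp only [zero_mul] at this
    linarith
  have hv_anti := sidare_monoOn hvneg hkey
  -- decay bound
  have hdecay : ∀ t ∈ Set.Ici (0:ℝ), B * i t + C * d t + a t ≤
      (B * i 0 + C * d 0 + a 0) * Real.exp (-(δ * t)) := by
    intro t ht
    have h := hv_anti Set.self_mem_Ici ht ht
    simp only [mul_zero, Real.exp_zero, mul_one, neg_le_neg_iff] at h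
    have heq : B * i t + C * d t + a t =
        ((B * i t + C * d t + a t) * Real.exp (δ * t)) * Real.exp (-(δ * t)) := by
      rw [mul_assoc, ← Real.exp_add]; simp
    rw [heq]
    exact mul_le_mul_of_nonneg_right h (Real.exp_pos _).le
  have hu_nn : ∀ t ∈ Set.Ici (0:ℝ), 0 ≤ B * i t + C * d t + a t := by
    intro t ht
    have h1 := mul_nonneg (by linarith : (0:ℝ) ≤ B) (hi_nn t ht)
    have h2' := mul_nonneg (by linarith : (0:ℝ) ≤ C) (hd_nn t ht)
    have h3' := ha_nn t ht
    linarith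
  -- the bound tends to zero
  have hexp_tendsto : Tendsto (fun t : ℝ => (B * i 0 + C * d 0 + a 0) *
      Real.exp (-(δ * t))) atTop (𝓝 0) := by
    have h1 : Tendsto (fun t : ℝ => δ * t) atTop atTop :=
      Tendsto.const_mul_atTop hδpos tendsto_id
    have h1' : Tendsto (fun t : ℝ => -(δ * t)) atTop atBot :=
      tendsto_neg_atTop_atBot.comp h1
    have h2' := Real.tendsto_exp_atBot.comp h1'
    have h3' := h2'.const_mul (B * i 0 + C * d 0 + a 0)
    simpa [Function.comp] using h3'
  have hu_tendsto : Tendsto (fun t => B * i t + C * d t + a t) atTop (𝓝 0) := by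
    refine tendsto_of_tendsto_of_tendsto_of_le_of_le' tendsto_const_nhds hexp_tendsto ?_ ?_
    · exact (eventually_ge_atTop (0:ℝ)).mono (fun t ht => hu_nn t ht)
    · exact (eventually_ge_atTop (0:ℝ)).mono (fun t ht => hdecay t ht)
  -- i, d, a tend to zero
  have hi_tendsto : Tendsto i atTop (𝓝 0) := by
    refine tendsto_of_tendsto_of_tendsto_of_le_of_le' tendsto_const_nhds hu_tendsto ?_ ?_
    · exact (eventually_ge_atTop (0:ℝ)).mono (fun t ht => hi_nn t ht)
    · refine (eventually_ge_atTop (0:ℝ)).mono (fun t ht => ?_)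
      have h1 : i t ≤ B * i t := le_mul_of_one_le_left (hi_nn t ht) hB1
      have h2' := mul_nonneg (by linarith : (0:ℝ) ≤ C) (hd_nn t ht)
      have h3' := ha_nn t ht
      linarith
  have hd_tendsto : Tendsto d atTop (𝓝 0) := by
    refine tendsto_of_tendsto_of_tendsto_of_le_of_le' tendsto_const_nhds hu_tendsto ?_ ?_
    · exact (eventually_ge_atTop (0:ℝ)).mono (fun t ht => hd_nn t ht)
    · refine (eventually_ge_atTop (0:ℝ)).mono (fun t ht => ?_)
      have h1 : d t ≤ C * d t := le_mul_of_one_le_left (hd_nn t ht) hC1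
      have h2' := mul_nonneg (by linarith : (0:ℝ) ≤ B) (hi_nn t ht)
      have h3' := ha_nn t ht
      linarith
  have ha_tendsto : Tendsto a atTop (𝓝 0) := by
    refine tendsto_of_tendsto_of_tendsto_of_le_of_le' tendsto_const_nhds hu_tendsto ?_ ?_
    · exact (eventually_ge_atTop (0:ℝ)).mono (fun t ht => ha_nn t ht)
    · refine (eventually_ge_atTop (0:ℝ)).mono (fun t ht => ?_)
      have h1 := mul_nonneg (by linarith : (0:ℝ) ≤ B) (hi_nn t ht)
      have h2' := mul_nonneg (by linarith : (0:ℝ) ≤ C) (hd_nn t ht)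
      linarith
  -- limit of s
  have hst_anti : Antitone (fun t => s (max t 0)) := fun x y hxy =>
    hs_anti (max x 0) (max y 0) (le_max_right x 0) (max_le_max hxy le_rfl)
  have hst_bdd : BddBelow (Set.range (fun t => s (max t 0))) := by
    refine ⟨0, ?_⟩
    rintro _ ⟨t, rfl⟩
    exact hs_nn _ (le_max_right t 0)
  have hst := tendsto_atTop_ciInf hst_anti hst_bdd
  have hs_eq : (fun t => s (max t 0)) =ᶠ[atTop] s :=
    (eventually_ge_atTop (0:ℝ)).mono (fun t ht => congrArg s (max_eq_left ht))
  have hs_tendsto : Tendsto s atTop (𝓝 (⨅ t, s (max t 0))) := hst.congr' hs_eq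
  have hsInf_mem : (⨅ t, s (max t 0)) ∈ Set.Icc (0:ℝ) 1 := by
    constructor
    · exact ge_of_tendsto hs_tendsto
        ((eventually_ge_atTop (0:ℝ)).mono (fun t ht => hs_nn t ht))
    · exact le_of_tendsto hs_tendsto
        ((eventually_ge_atTop (0:ℝ)).mono (fun t ht => hs1 t ht))
  -- limit of r
  have hrt_mono : Monotone (fun t => r (max t 0)) := fun x y hxy =>
    hr_mono (le_max_right x 0) (le_max_right y 0) (max_le_max hxy le_rfl)
  have hrt_bdd : BddAbove (Set.range (fun t => r (max t 0))) := by
    refine ⟨1, ?_⟩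
    rintro _ ⟨t, rfl⟩
    exact hr1 _ (le_max_right t 0)
  have hrt := tendsto_atTop_ciSup hrt_mono hrt_bdd
  have hr_eq : (fun t => r (max t 0)) =ᶠ[atTop] r :=
    (eventually_ge_atTop (0:ℝ)).mono (fun t ht => congrArg r (max_eq_left ht))
  have hr_tendsto : Tendsto r atTop (𝓝 (⨆ t, r (max t 0))) := hrt.congr' hr_eq
  have hrInf_mem : (⨆ t, r (max t 0)) ∈ Set.Icc (0:ℝ) 1 := by
    constructor
    · exact ge_of_tendsto hr_tendsto
        ((eventually_ge_atTop (0:ℝ)).mono (fun t ht => hr_nn t ht))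
    · exact le_of_tendsto hr_tendsto
        ((eventually_ge_atTop (0:ℝ)).mono (fun t ht => hr1 t ht))
  -- limit of e
  have het_mono : Monotone (fun t => e (max t 0)) := fun x y hxy =>
    he_mono (le_max_right x 0) (le_max_right y 0) (max_le_max hxy le_rfl)
  have het_bdd : BddAbove (Set.range (fun t => e (max t 0))) := by
    refine ⟨1, ?_⟩
    rintro _ ⟨t, rfl⟩
    exact he1 _ (le_max_right t 0)
  have het := tendsto_atTop_ciSup het_mono het_bdd
  have he_eq : (fun t => e (max t 0)) =ᶠ[atTop] e :=
    (eventually_ge_atTop (0:ℝ)).mono (fun t ht => congrArg e (max_eq_left ht))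
  have he_tendsto : Tendsto e atTop (𝓝 (⨆ t, e (max t 0))) := het.congr' he_eq
  have heInf_mem : (⨆ t, e (max t 0)) ∈ Set.Icc (0:ℝ) 1 := by
    constructor
    · exact ge_of_tendsto he_tendsto
        ((eventually_ge_atTop (0:ℝ)).mono (fun t ht => he_nn t ht))
    · exact le_of_tendsto he_tendsto
        ((eventually_ge_atTop (0:ℝ)).mono (fun t ht => he1 t ht))
  exact ⟨_, _, _, hsInf_mem, hrInf_mem, heInf_mem, hs_tendsto, hi_tendsto, hd_tendsto,
    ha_tendsto, hr_tendsto, he_tendsto, by norm_num⟩
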